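/- arXiv:0802.1303 — 6 statements merged into one kernel-verified Lean document; each statement's English description precedes it below -/
import Mathlib

section
/- Let F be a GCD-morphic sequence such that F(k) = 1 for all 1 ≤ k < n. Define F'(k) = 1 if k ≤ n, F'(k) = F(k)/F(n) if n ∣ k and k > n, and F'(k) = F(k) otherwise. Then F' is well defined (i.e. F(n) ∣ F(k) whenever n ∣ k), F(k) = G_{F(n),n}(k) · F'(k) for all k ≥ 1, and F' is GCD-morphic. -/
theorem gcd_morphic_factor_step (F : ℕ → ℕ) (hpos : ∀ n, 1 ≤ n → 0 < F n)
    (hF : ∀ n m, 1 ≤ n → 1 ≤ m → Nat.gcd (F n) (F m) = F (Nat.gcd n m))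
    (n : ℕ) (hn : 1 ≤ n) (hones : ∀ k, 1 ≤ k → k < n → F k = 1)
    (F' : ℕ → ℕ)
    (hF' : ∀ k, F' k = if k ≤ n then 1 else if n ∣ k then F k / F n else F k) :
    (∀ k, n ∣ k → 1 ≤ k → F n ∣ F k) ∧
    (∀ k, 1 ≤ k → F k = (if n ∣ k ∧ 0 < k then F n else 1) * F' k) ∧
    (∀ k l, 1 ≤ k → 1 ≤ l → Nat.gcd (F' k) (F' l) = F' (Nat.gcd k l)) := by
  have hdvd : ∀ a b, 1 ≤ a → 1 ≤ b → a ∣ b → F a ∣ F b := by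
    intro a b ha hb h
    have := Nat.gcd_dvd_right (F a) (F b)
    rwa [hF a b ha hb, Nat.gcd_eq_left h] at this
  -- simplified formula for F'
  have hF'' : ∀ k, 1 ≤ k → F' k = if n ∣ k then F k / F n else F k := by
    intro k hk
    rw [hF' k]
    by_cases hle : k ≤ n
    · by_cases hd : n ∣ k
      · have : k = n := le_antisymm hle (Nat.le_of_dvd hk hd)
        subst this
        simp [Nat.div_self (hpos k hk)]
      · have hlt : k < n := lt_of_le_of_ne hle (by rintro rfl; exact hd dvd_rfl)
        simp [hle, hd, hones k hk hlt]
    · simp [hle]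
  have hcop : ∀ l, 1 ≤ l → ¬ n ∣ l → Nat.Coprime (F n) (F l) := by
    intro l hl hnd
    have hg1 : 1 ≤ Nat.gcd n l := Nat.gcd_pos_of_pos_left l hn
    have hglt : Nat.gcd n l < n := by
      refine lt_of_le_of_ne (Nat.le_of_dvd hn (Nat.gcd_dvd_left n l)) ?_
      intro h
      exact hnd (h ▸ Nat.gcd_dvd_right n l)
    unfold Nat.Coprime
    rw [hF n l hn hl, hones _ hg1 hglt]
  refine ⟨fun k hdk hk => hdvd n k hn hk hdk, ?_, ?_⟩
  · intro k hk
    by_cases hd : n ∣ k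
    · have : n ∣ k ∧ 0 < k := ⟨hd, hk⟩
      rw [if_pos this, hF'' k hk, if_pos hd,
        Nat.mul_div_cancel' (hdvd n k hn hk hd)]
    · rw [if_neg (by tauto), hF'' k hk, if_neg hd, one_mul]
  · intro k l hk hl
    have hg : 1 ≤ Nat.gcd k l := Nat.gcd_pos_of_pos_left l hk
    rw [hF'' k hk, hF'' l hl, hF'' _ hg]
    by_cases hdk : n ∣ k <;> by_cases hdl : n ∣ l
    · have hdg : n ∣ Nat.gcd k l := Nat.dvd_gcd hdk hdl
      rw [if_pos hdk, if_pos hdl, if_pos hdg]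
      have hFn : 0 < F n := hpos n hn
      have h2 : F n * Nat.gcd (F k / F n) (F l / F n) = F (Nat.gcd k l) := by
        rw [← Nat.gcd_mul_left, Nat.mul_div_cancel' (hdvd n k hn hk hdk),
          Nat.mul_div_cancel' (hdvd n l hn hl hdl), hF k l hk hl]
      rw [← h2, Nat.mul_div_cancel_left _ hFn]
    · have hdg : ¬ n ∣ Nat.gcd k l := fun h => hdl (h.trans (Nat.gcd_dvd_right k l))
      rw [if_pos hdk, if_neg hdl, if_neg hdg]
      have h1 : F n * (F k / F n) = F k := Nat.mul_div_cancel' (hdvd n k hn hk hdk)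
      have := (hcop l hl hdl).gcd_mul_left_cancel (F k / F n)
      rw [h1] at this
      rw [← this, hF k l hk hl]
    · have hdg : ¬ n ∣ Nat.gcd k l := fun h => hdk (h.trans (Nat.gcd_dvd_left k l))
      rw [if_neg hdk, if_pos hdl, if_neg hdg]
      have h1 : F n * (F l / F n) = F l := Nat.mul_div_cancel' (hdvd n l hn hl hdl)
      have := (hcop k hk hdk).gcd_mul_left_cancel_right (F l / F n)
      rw [h1] at this
      rw [← this, hF k l hk hl]
    · have hdg : ¬ n ∣ Nat.gcd k l := fun h => hdk (h.trans (Nat.gcd_dvd_left k l))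
      rw [if_neg hdk, if_neg hdl, if_neg hdg, hF k l hk hl]
end

section
/- Let F be defined from a positive-valued sequence c : ℕ → ℕ by F(n) = ∏_{j ∣ n} c(j) (product over positive divisors j of n). If c satisfies: for all k < n with gcd(n, k) ≠ k, gcd(c(n), c(k)) = 1, then F is GCD-morphic, i.e. gcd(F(n), F(m)) = F(gcd(n, m)) for all n, m ≥ 1. -/
/-!
Write `d = gcd n m`. Splitting off the divisors of `d` gives `F n = A * F d` and `F m = B * F d`,
where `A` (resp. `B`) is the product of `c j` over the divisors `j` of `n` (resp. `m`) not dividing `d`.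
Such a `j ∣ n` and `k ∣ m` never divide each other (otherwise the smaller one would divide `d`),
so (C1) makes `A` and `B` coprime and `gcd (F n) (F m) = gcd A B * F d = F d`.
-/

/-- (C1) in divisibility form; pairs involving `0` are excluded automatically, as `0` is not
incomparable with anything. -/
def CoprimeOnIncomparable (c : ℕ → ℕ) : Prop :=
  ∀ j k, ¬ j ∣ k → ¬ k ∣ j → Nat.Coprime (c j) (c k)

theorem coprimeOnIncomparable_of_C1 {c : ℕ → ℕ}
    (hC1 : ∀ k n, 1 ≤ k → k < n → Nat.gcd n k ≠ k → Nat.gcd (c n) (c k) = 1) :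
    CoprimeOnIncomparable c := by
  intro j k hjk hkj
  have hj : j ≠ 0 := by rintro rfl; exact hkj (dvd_zero k)
  have hk : k ≠ 0 := by rintro rfl; exact hjk (dvd_zero j)
  rcases lt_trichotomy j k with hlt | rfl | hgt
  · exact Nat.Coprime.symm (hC1 j k (by omega) hlt (mt Nat.gcd_eq_right_iff_dvd.mp hjk))
  · exact absurd dvd_rfl hjk
  · exact hC1 k j (by omega) hgt (mt Nat.gcd_eq_right_iff_dvd.mp hkj)

theorem Nat.prod_divisors_eq_prod_sdiff_mul {M : Type*} [CommMonoid M] (f : ℕ → M) {n d : ℕ}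
    (hn : n ≠ 0) (hd : d ∣ n) :
    ∏ j ∈ n.divisors, f j = (∏ j ∈ n.divisors \ d.divisors, f j) * ∏ j ∈ d.divisors, f j :=
  (Finset.prod_sdiff (Nat.divisors_subset_of_dvd hn hd)).symm

theorem not_dvd_of_dvd_of_not_dvd_gcd {n m j k : ℕ} (hj : j ∣ n) (hk : k ∣ m)
    (hjd : ¬ j ∣ Nat.gcd n m) : ¬ j ∣ k :=
  fun hjk => hjd (Nat.dvd_gcd hj (hjk.trans hk))

theorem CoprimeOnIncomparable.coprime_prod_divisors_sdiff {c : ℕ → ℕ}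
    (hc : CoprimeOnIncomparable c) (n m : ℕ) :
    Nat.Coprime (∏ j ∈ n.divisors \ (Nat.gcd n m).divisors, c j)
      (∏ k ∈ m.divisors \ (Nat.gcd n m).divisors, c k) := by
  refine Nat.Coprime.prod_left fun j hj => Nat.Coprime.prod_right fun k hk => ?_
  simp only [Finset.mem_sdiff, Nat.mem_divisors, not_and] at hj hk
  have hjd : ¬ j ∣ Nat.gcd n m := fun h => hj.2 h (Nat.gcd_ne_zero_left hj.1.2)
  have hkd : ¬ k ∣ Nat.gcd m n := by
    rw [Nat.gcd_comm]; exact fun h => hk.2 h (Nat.gcd_ne_zero_right hk.1.2)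
  exact hc j k (not_dvd_of_dvd_of_not_dvd_gcd hj.1.1 hk.1.1 hjd)
    (not_dvd_of_dvd_of_not_dvd_gcd hk.1.1 hj.1.1 hkd)

theorem CoprimeOnIncomparable.gcd_prod_divisors {c : ℕ → ℕ} (hc : CoprimeOnIncomparable c)
    {n m : ℕ} (hn : n ≠ 0) (hm : m ≠ 0) :
    Nat.gcd (∏ j ∈ n.divisors, c j) (∏ j ∈ m.divisors, c j) =
      ∏ j ∈ (Nat.gcd n m).divisors, c j := by
  rw [Nat.prod_divisors_eq_prod_sdiff_mul c hn (Nat.gcd_dvd_left n m),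
    Nat.prod_divisors_eq_prod_sdiff_mul c hm (Nat.gcd_dvd_right n m), Nat.gcd_mul_right,
    hc.coprime_prod_divisors_sdiff n m, one_mul]

theorem C1_implies_gcd_morphic_general (c : ℕ → ℕ)
    (hC1 : ∀ k n, 1 ≤ k → k < n → Nat.gcd n k ≠ k → Nat.gcd (c n) (c k) = 1)
    (F : ℕ → ℕ) (hFdef : ∀ n, F n = ∏ j ∈ n.divisors, c j) :
    ∀ n m, 1 ≤ n → 1 ≤ m → Nat.gcd (F n) (F m) = F (Nat.gcd n m) := by
  intro n m hn hm
  simp only [hFdef]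
  exact (coprimeOnIncomparable_of_C1 hC1).gcd_prod_divisors (by omega) (by omega)

theorem C1_implies_gcd_morphic (c : ℕ → ℕ) (hpos : ∀ j, 1 ≤ j → 1 ≤ c j)
    (hC1 : ∀ k n, 1 ≤ k → k < n → Nat.gcd n k ≠ k → Nat.gcd (c n) (c k) = 1)
    (F : ℕ → ℕ) (hFdef : ∀ n, F n = ∏ j ∈ n.divisors, c j) :
    ∀ n m, 1 ≤ n → 1 ≤ m → Nat.gcd (F n) (F m) = F (Nat.gcd n m) :=
  C1_implies_gcd_morphic_general c hC1 F hFdef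
end

section
/- Let F be defined from a positive-valued sequence c : ℕ → ℕ by F(n) = ∏_{j ∣ n} c(j). If F is GCD-morphic, then c satisfies condition (C1): for all k < n with gcd(n, k) ≠ k, gcd(c(n), c(k)) = 1. -/
/-!
Put `g = gcd n k`. Since `g` is a proper divisor of both `n` and `k`, the products `F n` and `F k`
contain the factor `F g` together with the extra factor `c n`, resp. `c k`. Hence
`gcd (c n) (c k) * F g` divides `gcd (F n) (F k) = F g`, and `F g ≠ 0` forces `gcd (c n) (c k) = 1`.
-/

theorem Nat.mul_prod_divisors_dvd_prod_divisors {M : Type*} [CommMonoid M] (c : ℕ → M)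
    {d m : ℕ} (hm : m ≠ 0) (hdm : d ∣ m) (hne : d ≠ m) :
    c m * ∏ j ∈ d.divisors, c j ∣ ∏ j ∈ m.divisors, c j := by
  have hm_notMem : m ∉ d.divisors := fun h => hne (Nat.dvd_antisymm hdm (Nat.dvd_of_mem_divisors h))
  rw [← Finset.prod_insert hm_notMem]
  refine Finset.prod_dvd_prod_of_subset _ _ _ (Finset.insert_subset ?_ ?_)
  · exact Nat.mem_divisors_self m hm
  · exact Nat.divisors_subset_of_dvd hm hdm

theorem Nat.gcd_eq_one_of_mul_dvd_of_gcd_eq {a b x y z : ℕ} (hx : x ≠ 0)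
    (hay : a * x ∣ y) (hbz : b * x ∣ z) (hyz : Nat.gcd y z = x) : Nat.gcd a b = 1 := by
  subst hyz
  have hdvd : Nat.gcd a b * Nat.gcd y z ∣ 1 * Nat.gcd y z := by
    rw [one_mul]
    exact Nat.dvd_gcd ((mul_dvd_mul_right (Nat.gcd_dvd_left a b) _).trans hay)
      ((mul_dvd_mul_right (Nat.gcd_dvd_right a b) _).trans hbz)
  exact Nat.eq_one_of_dvd_one ((mul_dvd_mul_iff_right hx).1 hdvd)

theorem gcd_morphic_implies_C1 (c : ℕ → ℕ) (hpos : ∀ j, 1 ≤ j → 1 ≤ c j)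
    (F : ℕ → ℕ) (hFdef : ∀ n, F n = ∏ j ∈ n.divisors, c j)
    (hF : ∀ n m, 1 ≤ n → 1 ≤ m → Nat.gcd (F n) (F m) = F (Nat.gcd n m)) :
    ∀ k n, 1 ≤ k → k < n → Nat.gcd n k ≠ k → Nat.gcd (c n) (c k) = 1 := by
  intro k n hk hkn hne
  have hg_lt : Nat.gcd n k < n := (Nat.le_of_dvd hk (Nat.gcd_dvd_right n k)).trans_lt hkn
  have hFg : F (Nat.gcd n k) ≠ 0 := by
    rw [hFdef, Finset.prod_ne_zero_iff]
    exact fun j hj => Nat.one_le_iff_ne_zero.mp (hpos j (Nat.pos_of_mem_divisors hj))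
  refine Nat.gcd_eq_one_of_mul_dvd_of_gcd_eq hFg ?_ ?_ (hF n k (hk.trans hkn.le) hk)
  · rw [hFdef, hFdef]
    exact Nat.mul_prod_divisors_dvd_prod_divisors c (by omega) (Nat.gcd_dvd_left n k) hg_lt.ne
  · rw [hFdef, hFdef]
    exact Nat.mul_prod_divisors_dvd_prod_divisors c (by omega) (Nat.gcd_dvd_right n k) hne
end

section
/- A sequence F defined by F(n) = ∏_{j ∣ n} c(j) for a positive-valued sequence c is GCD-morphic if and only if c satisfies condition (C1): for all k, n ≥ 1 with k < n and gcd(n, k) ≠ k, gcd(c(n), c(k)) = 1. -/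
/-!
Since `gcd n m` divides both `n` and `m`, both `F n` and `F m` factor as `F (gcd n m)` times the
product of `c` over the divisors of `n`, resp. `m`, that do not divide `m`, resp. `n`. So `F` is
GCD-morphic exactly when these two residual products are always coprime. A divisor of `n` not
dividing `m` and a divisor of `m` not dividing `n` never divide one another, which gives (C1) ⇒
GCD-morphic; conversely, for `i`, `j` with neither dividing the other, taking `n = i`, `m = j`
puts `c i` and `c j` into the two residual products.
-/

open Finset

namespace Nat

theorem mem_divisors_sdiff_divisors_gcd {n m j : ℕ} (hn : n ≠ 0) :
    j ∈ n.divisors \ (n.gcd m).divisors ↔ j ∣ n ∧ ¬ j ∣ m := by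
  simp only [mem_sdiff, mem_divisors, dvd_gcd_iff, ne_eq, hn, gcd_ne_zero_left hn,
    not_false_eq_true, and_true]
  tauto

variable (c : ℕ → ℕ)

theorem prod_divisors_eq_mul_prod_sdiff {d n : ℕ} (hd : d ∣ n) (hn : n ≠ 0) :
    ∏ j ∈ n.divisors, c j = (∏ j ∈ d.divisors, c j) * ∏ j ∈ n.divisors \ d.divisors, c j := by
  rw [mul_comm, prod_sdiff (divisors_subset_of_dvd hn hd)]

theorem gcd_prod_divisors {n m : ℕ} (hn : n ≠ 0) (hm : m ≠ 0) :
    gcd (∏ j ∈ n.divisors, c j) (∏ j ∈ m.divisors, c j) =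
      (∏ j ∈ (n.gcd m).divisors, c j) *
        gcd (∏ j ∈ n.divisors \ (n.gcd m).divisors, c j)
          (∏ j ∈ m.divisors \ (n.gcd m).divisors, c j) := by
  rw [prod_divisors_eq_mul_prod_sdiff c (gcd_dvd_left n m) hn,
    prod_divisors_eq_mul_prod_sdiff c (gcd_dvd_right n m) hm, gcd_mul_left]

theorem coprime_prod_divisors_sdiff_divisors_gcd
    (hc : ∀ i j, 0 < i → 0 < j → ¬ i ∣ j → ¬ j ∣ i → Coprime (c i) (c j))
    {n m : ℕ} (hn : n ≠ 0) (hm : m ≠ 0) :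
    Coprime (∏ j ∈ n.divisors \ (n.gcd m).divisors, c j)
      (∏ j ∈ m.divisors \ (n.gcd m).divisors, c j) := by
  refine Coprime.prod_left fun i hi => Coprime.prod_right fun j hj => ?_
  rw [mem_divisors_sdiff_divisors_gcd hn] at hi
  rw [gcd_comm, mem_divisors_sdiff_divisors_gcd hm] at hj
  exact hc i j (pos_of_dvd_of_pos hi.1 (pos_of_ne_zero hn))
    (pos_of_dvd_of_pos hj.1 (pos_of_ne_zero hm))
    (fun hij => hi.2 (hij.trans hj.1)) (fun hji => hj.2 (hji.trans hi.1))

theorem forall_gcd_prod_divisors_eq_iff (hc : ∀ j, 0 < j → 0 < c j) :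
    (∀ n m, 0 < n → 0 < m →
        gcd (∏ j ∈ n.divisors, c j) (∏ j ∈ m.divisors, c j) = ∏ j ∈ (n.gcd m).divisors, c j) ↔
      ∀ i j, 0 < i → 0 < j → ¬ i ∣ j → ¬ j ∣ i → Coprime (c i) (c j) := by
  constructor
  · intro h i j hi hj hij hji
    have hpos : 0 < ∏ k ∈ (i.gcd j).divisors, c k :=
      prod_pos fun k hk => hc k (pos_of_mem_divisors hk)
    have hrest := h i j hi hj
    rw [gcd_prod_divisors c hi.ne' hj.ne', mul_eq_left₀ hpos.ne'] at hrest
    refine Coprime.of_dvd (dvd_prod_of_mem c ?_) (dvd_prod_of_mem c ?_) hrest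
    · exact (mem_divisors_sdiff_divisors_gcd hi.ne').2 ⟨dvd_rfl, hij⟩
    · rw [gcd_comm]
      exact (mem_divisors_sdiff_divisors_gcd hj.ne').2 ⟨dvd_rfl, hji⟩
  · intro h n m hn hm
    rw [gcd_prod_divisors c hn.ne' hm.ne',
      coprime_prod_divisors_sdiff_divisors_gcd c h hn.ne' hm.ne', mul_one]

theorem forall_coprime_of_not_dvd_iff :
    (∀ i j, 0 < i → 0 < j → ¬ i ∣ j → ¬ j ∣ i → Coprime (c i) (c j)) ↔
      ∀ k n, 0 < k → 0 < n → k < n → gcd n k ≠ k → gcd (c n) (c k) = 1 := by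
  simp only [ne_eq, gcd_eq_right_iff_dvd]
  constructor
  · exact fun h k n hk hn hkn hkn' => h n k hn hk (not_dvd_of_pos_of_lt hk hkn) hkn'
  · intro h i j hi hj hij hji
    rcases lt_trichotomy i j with hlt | rfl | hlt
    · exact Coprime.symm (h i j hi hj hlt hij)
    · exact absurd dvd_rfl hij
    · exact h j i hj hi hlt hji

end Nat

theorem gcd_morphic_iff_C1 (c : ℕ → ℕ) (hpos : ∀ j, 1 ≤ j → 1 ≤ c j)
    (F : ℕ → ℕ) (hFdef : ∀ n, F n = ∏ j ∈ n.divisors, c j) :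
    (∀ n m, 1 ≤ n → 1 ≤ m → Nat.gcd (F n) (F m) = F (Nat.gcd n m)) ↔
    (∀ k n, 1 ≤ k → 1 ≤ n → k < n → Nat.gcd n k ≠ k → Nat.gcd (c n) (c k) = 1) := by
  obtain rfl : F = fun n => ∏ j ∈ n.divisors, c j := funext hFdef
  exact (Nat.forall_gcd_prod_divisors_eq_iff c hpos).trans (Nat.forall_coprime_of_not_dvd_iff c)
end

section
/- Every GCD-morphic sequence F admits a factorization into primary sequences: there exists a positive-valued sequence c : ℕ → ℕ such that F(n) = ∏_{j ∣ n} c(j) for all n ≥ 1. Explicitly, c can be defined recursively by c(n) = F(n) / ∏_{k ∣ n, k < n} c(k). -/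
/-!
Writing `c n = F n / ∏_{d ∣ n, d < n} c d`, everything reduces to showing that the product over
the proper divisors of `n` divides `F n`. This follows from the stronger identity
`∏_{d ∈ D} c d = lcm_{d ∈ D} F d` for every finite divisor-closed set `D` of positive integers,
proved by removing the largest element `m` of `D`: by the GCD property and the distributivity of
`gcd` over `lcm`, `gcd (F m) (lcm_{D \ {m}} F) = lcm_{d ∣ m, d < m} F`, which by induction is the
product of `c` over the proper divisors of `m`, so `lcm (F m) (lcm_{D \ {m}} F)` gains exactly the
factor `c m`. For `D` the divisors of `n` the lcm is `F n`.
-/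

open Finset

theorem Nat.gcd_finset_lcm {ι : Type*} {a : ℕ} {s : Finset ι} {f : ι → ℕ} (ha : a ≠ 0)
    (hf : ∀ i ∈ s, f i ≠ 0) : Nat.gcd a (s.lcm f) = s.lcm fun i ↦ Nat.gcd a (f i) := by
  have hlcm : s.lcm f ≠ 0 := lcm_ne_zero_iff.mpr hf
  have hgcd : ∀ i ∈ s, Nat.gcd a (f i) ≠ 0 := fun _ _ ↦ Nat.gcd_ne_zero_left ha
  refine Nat.eq_of_factorization_eq (Nat.gcd_ne_zero_left ha) (lcm_ne_zero_iff.mpr hgcd)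
    fun p ↦ ?_
  rw [Nat.factorization_gcd ha hlcm, Finsupp.inf_apply, Finset.factorization_lcm hf,
    Finset.factorization_lcm hgcd, sup_inf_distrib_left]
  exact sup_congr rfl fun i hi ↦ by rw [Nat.factorization_gcd ha (hf i hi), Finsupp.inf_apply]

def Finset.IsDivisorClosed (D : Finset ℕ) : Prop :=
  0 ∉ D ∧ ∀ d ∈ D, ∀ e, e ∣ d → e ∈ D

namespace Finset.IsDivisorClosed

variable {D : Finset ℕ} {m : ℕ}

theorem divisors (n : ℕ) : n.divisors.IsDivisorClosed := by
  refine ⟨by simp, fun d hd e he ↦ ?_⟩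
  rw [Nat.mem_divisors] at hd ⊢
  exact ⟨he.trans hd.1, hd.2⟩

theorem properDivisors (n : ℕ) : n.properDivisors.IsDivisorClosed := by
  refine ⟨by simp, fun d hd e he ↦ ?_⟩
  have hd0 : 0 < d := Nat.pos_of_mem_properDivisors hd
  rw [Nat.mem_properDivisors] at hd ⊢
  exact ⟨he.trans hd.1, (Nat.le_of_dvd hd0 he).trans_lt hd.2⟩

theorem pos (hD : D.IsDivisorClosed) {d : ℕ} (hd : d ∈ D) : 0 < d :=
  Nat.pos_of_ne_zero fun h ↦ hD.1 (h ▸ hd)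

theorem properDivisors_subset_erase (hD : D.IsDivisorClosed) (hmD : m ∈ D) :
    m.properDivisors ⊆ D.erase m := fun e he ↦
  have he' := Nat.mem_properDivisors.mp he
  mem_erase.mpr ⟨he'.2.ne, hD.2 m hmD e he'.1⟩

theorem eq_of_dvd (hD : D.IsDivisorClosed) (hm : ∀ d ∈ D, d ≤ m) {d : ℕ} (hd : d ∈ D)
    (hmd : m ∣ d) : d = m :=
  le_antisymm (hm d hd) (Nat.le_of_dvd (hD.pos hd) hmd)

theorem erase (hD : D.IsDivisorClosed) (hm : ∀ d ∈ D, d ≤ m) : (D.erase m).IsDivisorClosed := by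
  refine ⟨fun h ↦ hD.1 (mem_of_mem_erase h), fun d hd e he ↦ mem_erase.mpr ⟨?_, ?_⟩⟩
  · rintro rfl
    exact (mem_erase.mp hd).1 (hD.eq_of_dvd hm (mem_of_mem_erase hd) he)
  · exact hD.2 d (mem_of_mem_erase hd) e he

theorem gcd_mem_properDivisors (hD : D.IsDivisorClosed) (hmD : m ∈ D) (hm : ∀ d ∈ D, d ≤ m)
    {d : ℕ} (hd : d ∈ D.erase m) : Nat.gcd m d ∈ m.properDivisors := by
  have hgcd_le : Nat.gcd m d ≤ m := Nat.le_of_dvd (hD.pos hmD) (Nat.gcd_dvd_left m d)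
  refine Nat.mem_properDivisors.mpr ⟨Nat.gcd_dvd_left m d, hgcd_le.lt_of_ne fun h ↦ ?_⟩
  exact (mem_erase.mp hd).1 (hD.eq_of_dvd hm (mem_of_mem_erase hd) (h ▸ Nat.gcd_dvd_right m d))

end Finset.IsDivisorClosed

def primitivePart (F : ℕ → ℕ) (n : ℕ) : ℕ :=
  F n / ∏ k ∈ n.properDivisors.attach, primitivePart F k.1
decreasing_by exact (Nat.mem_properDivisors.mp k.2).2

theorem primitivePart_eq (F : ℕ → ℕ) (n : ℕ) :
    primitivePart F n = F n / ∏ k ∈ n.properDivisors, primitivePart F k := by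
  rw [primitivePart, prod_attach]

def IsGcdMorphic (F : ℕ → ℕ) : Prop :=
  ∀ n m, 1 ≤ n → 1 ≤ m → Nat.gcd (F n) (F m) = F (Nat.gcd n m)

namespace IsGcdMorphic

variable {F : ℕ → ℕ}

theorem dvd (hF : IsGcdMorphic F) {d n : ℕ} (hn : n ≠ 0) (h : d ∣ n) : F d ∣ F n := by
  have hd : 1 ≤ d := Nat.pos_of_dvd_of_pos h (Nat.pos_of_ne_zero hn)
  rw [← Nat.gcd_eq_left_iff_dvd, hF d n hd (Nat.one_le_iff_ne_zero.mpr hn), Nat.gcd_eq_left h]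

theorem lcm_divisors (hF : IsGcdMorphic F) {n : ℕ} (hn : n ≠ 0) : n.divisors.lcm F = F n :=
  Nat.dvd_antisymm (Finset.lcm_dvd fun _ hd ↦ hF.dvd hn (Nat.dvd_of_mem_divisors hd))
    (dvd_lcm (Nat.mem_divisors_self n hn))

theorem lcm_properDivisors_dvd (hF : IsGcdMorphic F) (n : ℕ) : n.properDivisors.lcm F ∣ F n :=
  Finset.lcm_dvd fun _ hd ↦
    hF.dvd (Nat.ne_zero_of_lt (Nat.mem_properDivisors.mp hd).2) (Nat.mem_properDivisors.mp hd).1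

theorem gcd_lcm_erase (hF : IsGcdMorphic F) (hpos : ∀ n, 1 ≤ n → 0 < F n) {D : Finset ℕ}
    (hD : D.IsDivisorClosed) {m : ℕ} (hmD : m ∈ D) (hm : ∀ d ∈ D, d ≤ m) :
    Nat.gcd (F m) ((D.erase m).lcm F) = m.properDivisors.lcm F := by
  have hm1 : 1 ≤ m := hD.pos hmD
  rw [Nat.gcd_finset_lcm (hpos m hm1).ne'
    fun d hd ↦ (hpos d (hD.pos (mem_of_mem_erase hd))).ne']
  refine Nat.dvd_antisymm (Finset.lcm_dvd fun d hd ↦ ?_) (Finset.lcm_dvd fun e he ↦ ?_)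
  · rw [hF m d hm1 (hD.pos (mem_of_mem_erase hd))]
    exact dvd_lcm (hD.gcd_mem_properDivisors hmD hm hd)
  · have he1 : 1 ≤ e := Nat.pos_of_mem_properDivisors he
    have hgcd : F e = Nat.gcd (F m) (F e) := by
      rw [hF m e hm1 he1, Nat.gcd_eq_right (Nat.mem_properDivisors.mp he).1]
    exact hgcd ▸ dvd_lcm (hD.properDivisors_subset_erase hmD he)

theorem prod_primitivePart_eq_lcm (hF : IsGcdMorphic F) (hpos : ∀ n, 1 ≤ n → 0 < F n)
    (D : Finset ℕ) (hD : D.IsDivisorClosed) : ∏ d ∈ D, primitivePart F d = D.lcm F := by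
  induction D using Finset.strongInduction with
  | H D ih =>
    rcases D.eq_empty_or_nonempty with rfl | hne
    · simp
    obtain ⟨m, hmD, hm⟩ : ∃ m ∈ D, ∀ d ∈ D, d ≤ m := ⟨D.max' hne, D.max'_mem hne, D.le_max'⟩
    set P := m.properDivisors.lcm F
    set L := (D.erase m).lcm F
    have hprodP : ∏ k ∈ m.properDivisors, primitivePart F k = P :=
      ih _ ((hD.properDivisors_subset_erase hmD).trans_ssubset (erase_ssubset hmD))
        (IsDivisorClosed.properDivisors m)
    have hprodL : ∏ d ∈ D.erase m, primitivePart F d = L := ih _ (erase_ssubset hmD) (hD.erase hm)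
    have hP_dvd : P ∣ F m := hF.lcm_properDivisors_dvd m
    have hP_pos : 0 < P := Nat.pos_of_dvd_of_pos hP_dvd (hpos m (hD.pos hmD))
    have hFm : F m = primitivePart F m * P := by
      rw [primitivePart_eq, hprodP, Nat.div_mul_cancel hP_dvd]
    rw [← insert_erase hmD, prod_insert (notMem_erase m D), lcm_insert, lcm_eq_nat_lcm, hprodL]
    calc primitivePart F m * L = primitivePart F m * P * L / P := by
          rw [mul_right_comm, Nat.mul_div_cancel _ hP_pos]
      _ = F m * L / Nat.gcd (F m) L := by rw [hF.gcd_lcm_erase hpos hD hmD hm, ← hFm]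
      _ = Nat.lcm (F m) L := rfl

theorem prod_divisors_primitivePart (hF : IsGcdMorphic F) (hpos : ∀ n, 1 ≤ n → 0 < F n)
    {n : ℕ} (hn : n ≠ 0) : ∏ d ∈ n.divisors, primitivePart F d = F n := by
  rw [hF.prod_primitivePart_eq_lcm hpos _ (IsDivisorClosed.divisors n), hF.lcm_divisors hn]

theorem primitivePart_pos (hF : IsGcdMorphic F) (hpos : ∀ n, 1 ≤ n → 0 < F n) {n : ℕ}
    (hn : n ≠ 0) : 0 < primitivePart F n := by
  have hFn := hpos n (Nat.one_le_iff_ne_zero.mpr hn)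
  rw [← hF.prod_divisors_primitivePart hpos hn, ← Nat.insert_self_properDivisors hn,
    prod_insert Nat.self_notMem_properDivisors] at hFn
  exact Nat.pos_of_mul_pos_right hFn

end IsGcdMorphic

theorem gcd_morphic_factorization (F : ℕ → ℕ) (hpos : ∀ n, 1 ≤ n → 0 < F n)
    (hF : ∀ n m, 1 ≤ n → 1 ≤ m → Nat.gcd (F n) (F m) = F (Nat.gcd n m)) :
    ∃ c : ℕ → ℕ, (∀ j, 1 ≤ j → 0 < c j) ∧
      (∀ n, 1 ≤ n → F n = ∏ j ∈ n.divisors, c j) ∧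
      (∀ n, 1 ≤ n → c n = F n / ∏ k ∈ n.properDivisors, c k) :=
  ⟨primitivePart F,
    fun _ hj ↦ IsGcdMorphic.primitivePart_pos hF hpos (Nat.one_le_iff_ne_zero.mp hj),
    fun _ hn ↦ (IsGcdMorphic.prod_divisors_primitivePart hF hpos
      (Nat.one_le_iff_ne_zero.mp hn)).symm,
    fun n _ ↦ primitivePart_eq F n⟩
end

section
/- If c satisfies (C1) and F(n) = ∏_{j ∣ n} c(j), then for all n, k ≥ 1: gcd(∏_{j ∣ n, j ∤ k} c(j), ∏_{j ∣ k, j ∤ n} c(j)) = 1. -/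
/-!
Every `j ∣ n` with `j ∤ k` is incomparable under divisibility with every `i ∣ k` with `i ∤ n`
(if `j ∣ i` then `j ∣ k`, and symmetrically), so (C1), applied with the larger of the two as `n`,
makes `c j` and `c i` coprime. A product of factors pairwise coprime to the factors of another
product is coprime to it.
-/

theorem coprime_of_not_dvd_of_not_dvd {c : ℕ → ℕ}
    (hC1 : ∀ k n, 1 ≤ k → k < n → Nat.gcd n k ≠ k → Nat.gcd (c n) (c k) = 1)
    {i j : ℕ} (hij : ¬ i ∣ j) (hji : ¬ j ∣ i) : Nat.Coprime (c i) (c j) := by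
  -- Everything divides `0`, so incomparable indices are positive.
  have hi : 1 ≤ i := Nat.one_le_iff_ne_zero.mpr (by rintro rfl; exact hji (dvd_zero j))
  have hj : 1 ≤ j := Nat.one_le_iff_ne_zero.mpr (by rintro rfl; exact hij (dvd_zero i))
  rcases lt_trichotomy i j with hlt | rfl | hgt
  · exact Nat.Coprime.symm (hC1 i j hi hlt fun h => hij (h ▸ Nat.gcd_dvd_left j i))
  · exact absurd dvd_rfl hij
  · exact hC1 j i hj hgt fun h => hji (h ▸ Nat.gcd_dvd_left i j)

theorem coprime_complementary_products_general (c : ℕ → ℕ)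
    (hC1 : ∀ k n, 1 ≤ k → k < n → Nat.gcd n k ≠ k → Nat.gcd (c n) (c k) = 1) :
    ∀ n k, 1 ≤ n → 1 ≤ k →
      Nat.gcd (∏ j ∈ n.divisors.filter (fun j => ¬ j ∣ k), c j)
              (∏ j ∈ k.divisors.filter (fun j => ¬ j ∣ n), c j) = 1 := by
  intro n k _ _
  refine Nat.Coprime.prod_left fun j hj => Nat.Coprime.prod_right fun i hi => ?_
  simp only [Finset.mem_filter, Nat.mem_divisors] at hj hi
  obtain ⟨⟨hjn, -⟩, hjk⟩ := hj
  obtain ⟨⟨hik, -⟩, hin⟩ := hi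
  exact coprime_of_not_dvd_of_not_dvd hC1 (fun h => hjk (h.trans hik)) fun h => hin (h.trans hjn)

theorem coprime_complementary_products (c : ℕ → ℕ)
    (hpos : ∀ j, 1 ≤ j → 1 ≤ c j)
    (hC1 : ∀ k n, 1 ≤ k → k < n → Nat.gcd n k ≠ k → Nat.gcd (c n) (c k) = 1) :
    ∀ n k, 1 ≤ n → 1 ≤ k →
      Nat.gcd (∏ j ∈ n.divisors.filter (fun j => ¬ j ∣ k), c j)
              (∏ j ∈ k.divisors.filter (fun j => ¬ j ∣ n), c j) = 1 :=
  coprime_complementary_products_general c hC1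
end
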